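/- Let X₁ = (x₁,y₁) and X₂ = (x₂,y₂) be independent random points in ℝ², each distributed according to the Archimedes measure. Then the signed distance from the origin to the line through X₁ and X₂, namely D = (x₁y₂ - x₂y₁)/‖X₁ - X₂‖ (which is well defined almost surely since X₁ ≠ X₂ almost surely), has the semicircle law: the distribution of D has density r ↦ (2/π)√(1 - r²) on (-1,1) with respect to Lebesgue measure. -/

import Mathlib

open MeasureTheory

/-- The Archimedes measure on `ℝ²`: density `1 / (2π √(1 - x² - y²))` with respect to
Lebesgue measure on the open unit disc `x² + y² < 1`, and density `0` outside it. -/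
noncomputable def archimedes : Measure (ℝ × ℝ) :=
  volume.withDensity fun p =>
    ENNReal.ofReal
      (if p.1 ^ 2 + p.2 ^ 2 < 1 then 1 / (2 * Real.pi * Real.sqrt (1 - p.1 ^ 2 - p.2 ^ 2))
       else 0)

/-- The signed distance from the origin to the line through the two points
`X₁ = (x₁, y₁)` and `X₂ = (x₂, y₂)`: `(x₁ y₂ - x₂ y₁) / ‖X₁ - X₂‖` (Euclidean norm). -/
noncomputable def signedDistLine (p : (ℝ × ℝ) × (ℝ × ℝ)) : ℝ :=
  (p.1.1 * p.2.2 - p.2.1 * p.1.2) /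
    Real.sqrt ((p.1.1 - p.2.1) ^ 2 + (p.1.2 - p.2.2) ^ 2)

open MeasureTheory Real Set intervalIntegral
open scoped ENNReal


noncomputable section
namespace Stmt13Aux


/-- lintegral version of polar coordinates change of variables -/
theorem lintegral_comp_polarCoord_symm (f : ℝ × ℝ → ℝ≥0∞) :
    ∫⁻ p in polarCoord.target, ENNReal.ofReal p.1 * f (polarCoord.symm p) = ∫⁻ p, f p := by
  set B : ℝ × ℝ → ℝ × ℝ →L[ℝ] ℝ × ℝ := fun p =>
    LinearMap.toContinuousLinearMap (Matrix.toLin (Module.Basis.finTwoProd ℝ) (Module.Basis.finTwoProd ℝ)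
      !![Real.cos p.2, -p.1 * Real.sin p.2; Real.sin p.2, p.1 * Real.cos p.2]) with hB
  have A : ∀ p ∈ polarCoord.symm.source, HasFDerivAt polarCoord.symm (B p) p := fun p _ =>
    hasFDerivAt_polarCoord_symm p
  have B_det : ∀ p, (B p).det = p.1 := by
    intro p
    conv_rhs => rw [← one_mul p.1, ← cos_sq_add_sin_sq p.2]
    simp only [B, neg_mul, LinearMap.det_toContinuousLinearMap, LinearMap.det_toLin,
      Matrix.det_fin_two_of, sub_neg_eq_add]
    ring
  symm
  calc
    ∫⁻ p, f p = ∫⁻ p in polarCoord.source, f p := by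
      rw [← setLIntegral_univ]
      exact setLIntegral_congr polarCoord_source_ae_eq_univ.symm
    _ = ∫⁻ p in polarCoord.symm '' polarCoord.target, f p := by
      rw [← polarCoord.symm_image_target_eq_source]
    _ = ∫⁻ p in polarCoord.target, ENNReal.ofReal |(B p).det| * f (polarCoord.symm p) := by
      apply lintegral_image_eq_lintegral_abs_det_fderiv_mul volume
        polarCoord.open_target.measurableSet
        (fun p hp => (A p hp).hasFDerivWithinAt) polarCoord.symm.injOn f
    _ = ∫⁻ p in polarCoord.target, ENNReal.ofReal p.1 * f (polarCoord.symm p) := by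
      refine setLIntegral_congr_fun polarCoord.open_target.measurableSet
        (fun p hp => ?_)
      rw [B_det, abs_of_pos]
      exact hp.1



/-- Rotation invariance of lintegral over `ℝ × ℝ`. -/
theorem lintegral_rot (α : ℝ) (g : ℝ × ℝ → ℝ≥0∞) :
    ∫⁻ x, g x = ∫⁻ z : ℝ × ℝ, g (z.1 * Real.sin α + z.2 * Real.cos α,
      -(z.1 * Real.cos α) + z.2 * Real.sin α) := by
  set M := LinearMap.toContinuousLinearMap (Matrix.toLin (Module.Basis.finTwoProd ℝ) (Module.Basis.finTwoProd ℝ)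
      !![Real.sin α, Real.cos α; -Real.cos α, Real.sin α]) with hM
  have hMdet : M.det = 1 := by
    simp only [M, LinearMap.det_toContinuousLinearMap, LinearMap.det_toLin,
      Matrix.det_fin_two_of]
    nlinarith [Real.sin_sq_add_cos_sq α]
  have hMapp : ∀ z : ℝ × ℝ, M z = (z.1 * Real.sin α + z.2 * Real.cos α,
      -(z.1 * Real.cos α) + z.2 * Real.sin α) := by
    intro z
    rw [hM, Matrix.toLin_finTwoProd_toContinuousLinearMap]
    simp [Prod.ext_iff]
    constructor <;> ring
  have hdet0 : M.det ≠ 0 := by rw [hMdet]; norm_num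
  have hinj : Function.Injective M := by
    have h := (M.toContinuousLinearEquivOfDetNeZero hdet0).injective
    intro a b hab
    exact h hab
  have hsurj : Function.Surjective M := by
    intro y
    obtain ⟨x, hx⟩ := (M.toContinuousLinearEquivOfDetNeZero hdet0).surjective y
    exact ⟨x, hx⟩
  calc ∫⁻ x, g x = ∫⁻ x in M '' univ, g x := by
        rw [image_univ, hsurj.range_eq, Measure.restrict_univ]
    _ = ∫⁻ z in univ, ENNReal.ofReal |M.det| * g (M z) := by
        exact lintegral_image_eq_lintegral_abs_det_fderiv_mul volume MeasurableSet.univ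
          (fun x _ => M.hasFDerivAt.hasFDerivWithinAt) hinj.injOn g
    _ = ∫⁻ z : ℝ × ℝ, g (z.1 * Real.sin α + z.2 * Real.cos α,
          -(z.1 * Real.cos α) + z.2 * Real.sin α) := by
        rw [Measure.restrict_univ]
        refine lintegral_congr fun z => ?_
        rw [hMdet, hMapp]
        simp

/-- 1D change of variables for lintegral. -/
theorem lintegral_image_eq_lintegral_abs_deriv_mul' {s : Set ℝ} {f f' : ℝ → ℝ}
    (hs : MeasurableSet s) (hf' : ∀ x ∈ s, HasDerivWithinAt f (f' x) s x) (hf : InjOn f s)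
    (g : ℝ → ℝ≥0∞) : ∫⁻ x in f '' s, g x = ∫⁻ x in s, ENNReal.ofReal |f' x| * g (f x) := by
  simpa only [ContinuousLinearMap.det_toSpanSingleton] using
    lintegral_image_eq_lintegral_abs_det_fderiv_mul volume hs
      (fun x hx => (hf' x hx).hasFDerivWithinAt) hf g

lemma image_aSin {a u v : ℝ} (ha : 0 < a) (hu : -(π/2) ≤ u) (hv : v ≤ π/2) (huv : u ≤ v) :
    (fun θ => a * Real.sin θ) '' Ioo u v = Ioo (a * Real.sin u) (a * Real.sin v) := by
  rcases eq_or_lt_of_le huv with rfl | huv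
  · simp
  · ext t
    constructor
    · rintro ⟨θ, hθ, rfl⟩
      have h1 := Real.strictMonoOn_sin ⟨hu, by linarith [hθ.2]⟩
        ⟨by linarith [hθ.1], by linarith [hθ.2]⟩ hθ.1
      have h2 := Real.strictMonoOn_sin ⟨by linarith [hθ.1], by linarith [hθ.2]⟩
        ⟨by linarith [hθ.1], hv⟩ hθ.2
      refine ⟨?_, ?_⟩
      · show a * Real.sin u < a * Real.sin θ
        nlinarith
      · show a * Real.sin θ < a * Real.sin v
        nlinarith
    · intro ht
      have hsu : -1 ≤ Real.sin u := Real.neg_one_le_sin u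
      have hsv : Real.sin v ≤ 1 := Real.sin_le_one v
      have ht1 : -1 ≤ t / a := by
        rw [le_div_iff₀ ha]; nlinarith [ht.1]
      have ht2 : t / a ≤ 1 := by
        rw [div_le_iff₀ ha]; nlinarith [ht.2]
      have h1 : Real.sin u < t / a := by rw [lt_div_iff₀ ha]; nlinarith [ht.1]
      have h2 : t / a < Real.sin v := by rw [div_lt_iff₀ ha]; nlinarith [ht.2]
      refine ⟨Real.arcsin (t / a), ⟨?_, ?_⟩, ?_⟩
      · calc u = Real.arcsin (Real.sin u) := (Real.arcsin_sin hu (by linarith)).symm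
          _ < Real.arcsin (t / a) :=
            Real.strictMonoOn_arcsin ⟨hsu, by linarith⟩ ⟨ht1, ht2⟩ h1
      · calc Real.arcsin (t / a) < Real.arcsin (Real.sin v) :=
              Real.strictMonoOn_arcsin ⟨ht1, ht2⟩ ⟨by linarith, hsv⟩ h2
          _ = v := Real.arcsin_sin (by linarith) hv
      · show a * Real.sin (Real.arcsin (t / a)) = t
        rw [Real.sin_arcsin ht1 ht2]; field_simp

/-- Substitution `t = a sin θ` in a lintegral. -/
lemma lintegral_sin_subst {a u v : ℝ} (ha : 0 < a) (hu : -(π/2) ≤ u) (hv : v ≤ π/2)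
    (huv : u ≤ v) (g : ℝ → ℝ≥0∞) :
    ∫⁻ t in Ioo (a * Real.sin u) (a * Real.sin v), g t
      = ∫⁻ θ in Ioo u v, ENNReal.ofReal (a * Real.cos θ) * g (a * Real.sin θ) := by
  have hinj : InjOn (fun θ => a * Real.sin θ) (Ioo u v) := by
    intro θ₁ h₁ θ₂ h₂ he
    have h₁' : θ₁ ∈ Icc (-(π/2)) (π/2) := ⟨by linarith [h₁.1], by linarith [h₁.2]⟩
    have h₂' : θ₂ ∈ Icc (-(π/2)) (π/2) := ⟨by linarith [h₂.1], by linarith [h₂.2]⟩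
    have he' : Real.sin θ₁ = Real.sin θ₂ := by
      have : a * Real.sin θ₁ = a * Real.sin θ₂ := he
      exact mul_left_cancel₀ ha.ne' this
    exact Real.injOn_sin h₁' h₂' he'
  rw [← image_aSin ha hu hv huv]
  rw [lintegral_image_eq_lintegral_abs_deriv_mul' measurableSet_Ioo
    (f' := fun θ => a * Real.cos θ)
    (fun θ _ => ((Real.hasDerivAt_sin θ).const_mul a).hasDerivWithinAt)
    hinj g]
  refine setLIntegral_congr_fun measurableSet_Ioo (fun θ hθ => ?_)
  have hc : 0 ≤ Real.cos θ := Real.cos_nonneg_of_mem_Icc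
    ⟨by linarith [hθ.1], by linarith [hθ.2]⟩
  rw [abs_of_nonneg (by positivity)]



/-- Convert a lintegral of `ofReal` over `Ioo` to `ofReal` of an interval integral. -/
lemma setLIntegral_Ioo_eq_ofReal {u v : ℝ} {f : ℝ → ℝ} (huv : u ≤ v)
    (hc : ContinuousOn f (Icc u v)) (hnn : ∀ x ∈ Ioo u v, 0 ≤ f x) :
    ∫⁻ x in Ioo u v, ENNReal.ofReal (f x) = ENNReal.ofReal (∫ x in u..v, f x) := by
  have hint : IntegrableOn f (Ioo u v) := (hc.integrableOn_Icc).mono_set Ioo_subset_Icc_self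
  rw [intervalIntegral.integral_of_le huv, integral_Ioc_eq_integral_Ioo,
    ofReal_integral_eq_lintegral_ofReal hint
      ((ae_restrict_iff' measurableSet_Ioo).2 (ae_of_all _ hnn))]

lemma inner_integral_eq (θ₁ : ℝ) :
    ∫ θ₂ in θ₁..(π/2), (Real.sin θ₂ - Real.sin θ₁)
      = Real.cos θ₁ - (π/2 - θ₁) * Real.sin θ₁ := by
  rw [intervalIntegral.integral_sub intervalIntegrable_sin (intervalIntegrable_const)]
  rw [integral_sin, intervalIntegral.integral_const]
  rw [Real.cos_pi_div_two]
  ring_nf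

lemma inner_integral_nonneg {θ₁ : ℝ} (h1 : -(π/2) ≤ θ₁) (h2 : θ₁ ≤ π/2) :
    0 ≤ Real.cos θ₁ - (π/2 - θ₁) * Real.sin θ₁ := by
  rw [← inner_integral_eq]
  apply intervalIntegral.integral_nonneg h2
  intro θ₂ hθ₂
  have : Real.sin θ₁ ≤ Real.sin θ₂ := by
    rcases eq_or_lt_of_le hθ₂.1 with rfl | h
    · exact le_refl _
    · exact (Real.strictMonoOn_sin ⟨h1, h2⟩ ⟨by linarith [hθ₂.1], hθ₂.2⟩ h).le
  linarith

lemma outer_integral_eq :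
    ∫ θ in (-(π/2))..(π/2), (Real.cos θ - (π/2 - θ) * Real.sin θ) = 4 := by
  have key : ∀ θ ∈ uIcc (-(π/2)) (π/2),
      HasDerivAt (fun θ => 2 * Real.sin θ + (π/2 - θ) * Real.cos θ)
        (Real.cos θ - (π/2 - θ) * Real.sin θ) θ := by
    intro θ _
    have h1 : HasDerivAt (fun θ => 2 * Real.sin θ) (2 * Real.cos θ) θ :=
      (Real.hasDerivAt_sin θ).const_mul 2
    have h2 : HasDerivAt (fun θ : ℝ => π/2 - θ) (-1) θ := by
      simpa using ((hasDerivAt_id θ).const_sub (π/2))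
    have h3 := h2.mul (Real.hasDerivAt_cos θ)
    exact (h1.add h3).congr_deriv (by ring)
  rw [intervalIntegral.integral_eq_sub_of_hasDerivAt key
    (Continuous.intervalIntegrable (by continuity) _ _)]
  simp [Real.sin_pi_div_two, Real.cos_pi_div_two]
  ring



def ad : ℝ → ℝ≥0∞ := fun s =>
  ENNReal.ofReal (if s < 1 then 1 / (2 * π * Real.sqrt (1 - s)) else 0)

lemma measurable_ad : Measurable ad := by
  apply ENNReal.measurable_ofReal.comp
  apply Measurable.ite (measurableSet_lt measurable_id measurable_const)
  · apply Measurable.div measurable_const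
    apply Measurable.mul measurable_const
    exact (Real.continuous_sqrt.measurable).comp (measurable_const.sub measurable_id)
  · exact measurable_const

lemma ad_zero {s : ℝ} (h : 1 ≤ s) : ad s = 0 := by
  simp [ad, if_neg (not_lt.2 h)]

def Jd (d t : ℝ) : ℝ≥0∞ := ∫⁻ ρ in Ioi 0, ENNReal.ofReal ρ * ad (d^2 + (t+ρ)^2)

def Hd (d : ℝ) : ℝ≥0∞ := ∫⁻ t, ad (d^2 + t^2) * Jd d t

lemma Jd_eq (d t : ℝ) :
    Jd d t = ∫⁻ t₂ in Ioi t, ENNReal.ofReal (t₂ - t) * ad (d^2 + t₂^2) := by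
  rw [← lintegral_indicator measurableSet_Ioi]
  rw [← lintegral_add_left_eq_self
    (fun t₂ => (Ioi t).indicator (fun t₂ => ENNReal.ofReal (t₂ - t) * ad (d^2 + t₂^2)) t₂) t]
  rw [Jd, ← lintegral_indicator measurableSet_Ioi]
  refine lintegral_congr fun ρ => ?_
  simp only [Set.indicator_apply, mem_Ioi]
  by_cases h : 0 < ρ
  · rw [if_pos h, if_pos (by linarith)]
    congr 2
    ring
  · rw [if_neg h, if_neg (fun hc => h (by linarith))]

lemma sqrt_helper {a θ : ℝ} (ha : 0 ≤ a) (hθ : θ ∈ Icc (-(π/2)) (π/2)) :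
    Real.sqrt (a^2 - (a * Real.sin θ)^2) = a * Real.cos θ := by
  have hc : 0 ≤ Real.cos θ := Real.cos_nonneg_of_mem_Icc hθ
  rw [show a^2 - (a * Real.sin θ)^2 = (a * Real.cos θ)^2 by
    nlinarith [Real.sin_sq_add_cos_sq θ]]
  exact Real.sqrt_sq (by positivity)

lemma ad_indicator {d a : ℝ} (hd : d^2 < 1) (ha : a = Real.sqrt (1 - d^2)) (t : ℝ) :
    ad (d^2 + t^2)
      = (Ioo (-a) a).indicator (fun t => ENNReal.ofReal (1 / (2 * π * Real.sqrt (a^2 - t^2)))) t := by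
  have ha2 : a^2 = 1 - d^2 := by rw [ha]; exact Real.sq_sqrt (by linarith)
  have ha0 : 0 < a := by rw [ha]; exact Real.sqrt_pos.2 (by linarith)
  by_cases h : t ∈ Ioo (-a) a
  · rw [Set.indicator_of_mem h]
    have h1 : d^2 + t^2 < 1 := by nlinarith [h.1, h.2]
    rw [ad, if_pos h1]
    rw [show 1 - (d^2 + t^2) = a^2 - t^2 by linarith]
  · rw [Set.indicator_of_notMem h]
    have h1 : ¬ (d^2 + t^2 < 1) := by
      simp only [mem_Ioo, not_and_or, not_lt] at h
      rcases h with h | h <;> nlinarith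
    simp [ad, if_neg h1]

lemma Jd_value {d a θ₁ : ℝ} (hd : d^2 < 1) (ha : a = Real.sqrt (1 - d^2))
    (hθ₁ : θ₁ ∈ Ioo (-(π/2)) (π/2)) :
    Jd d (a * Real.sin θ₁)
      = ENNReal.ofReal (a / (2*π) * (Real.cos θ₁ - (π/2 - θ₁) * Real.sin θ₁)) := by
  have ha0 : 0 < a := by rw [ha]; exact Real.sqrt_pos.2 (by linarith)
  have hs1 : Real.sin θ₁ < 1 := by
    have := Real.strictMonoOn_sin ⟨hθ₁.1.le, hθ₁.2.le⟩
      (⟨by linarith [Real.pi_pos], le_refl _⟩ : (π/2) ∈ Icc (-(π/2)) (π/2)) hθ₁.2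
    simpa using this
  have hs2 : -1 < Real.sin θ₁ := by
    have := Real.strictMonoOn_sin
      (⟨le_refl _, by linarith [Real.pi_pos]⟩ : (-(π/2)) ∈ Icc (-(π/2)) (π/2))
      ⟨hθ₁.1.le, hθ₁.2.le⟩ hθ₁.1
    simpa using this
  rw [Jd_eq]
  -- rewrite integrand with the indicator form and restrict the domain
  have step1 : ∫⁻ t₂ in Ioi (a * Real.sin θ₁), ENNReal.ofReal (t₂ - a * Real.sin θ₁) * ad (d^2 + t₂^2)
      = ∫⁻ t₂ in Ioo (a * Real.sin θ₁) a,
          ENNReal.ofReal (t₂ - a * Real.sin θ₁)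
            * ENNReal.ofReal (1 / (2 * π * Real.sqrt (a^2 - t₂^2))) := by
    have : ∀ t₂ : ℝ, ENNReal.ofReal (t₂ - a * Real.sin θ₁) * ad (d^2 + t₂^2)
        = (Ioo (-a) a).indicator
            (fun t₂ => ENNReal.ofReal (t₂ - a * Real.sin θ₁)
              * ENNReal.ofReal (1 / (2 * π * Real.sqrt (a^2 - t₂^2)))) t₂ := by
      intro t₂
      rw [ad_indicator hd ha]
      by_cases h : t₂ ∈ Ioo (-a) a
      · rw [Set.indicator_of_mem h, Set.indicator_of_mem h]
      · rw [Set.indicator_of_notMem h, Set.indicator_of_notMem h, mul_zero]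
    simp_rw [this]
    rw [setLIntegral_indicator measurableSet_Ioo]
    congr 1
    rw [Ioo_inter_Ioi]
    congr 1
    rw [max_eq_right]
    nlinarith
  rw [step1]
  have himg : Ioo (a * Real.sin θ₁) a = Ioo (a * Real.sin θ₁) (a * Real.sin (π/2)) := by
    rw [Real.sin_pi_div_two, mul_one]
  rw [himg, lintegral_sin_subst ha0 hθ₁.1.le (le_refl _) hθ₁.2.le]
  have step2 : ∫⁻ θ₂ in Ioo θ₁ (π/2), ENNReal.ofReal (a * Real.cos θ₂) *
        (ENNReal.ofReal (a * Real.sin θ₂ - a * Real.sin θ₁)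
          * ENNReal.ofReal (1 / (2 * π * Real.sqrt (a^2 - (a * Real.sin θ₂)^2))))
      = ∫⁻ θ₂ in Ioo θ₁ (π/2),
          ENNReal.ofReal (a / (2*π) * (Real.sin θ₂ - Real.sin θ₁)) := by
    refine setLIntegral_congr_fun measurableSet_Ioo (fun θ₂ hθ₂ => ?_)
    have hθ₂' : θ₂ ∈ Icc (-(π/2)) (π/2) := ⟨by linarith [hθ₁.1, hθ₂.1], hθ₂.2.le⟩
    rw [sqrt_helper ha0.le hθ₂']
    have hc2 : 0 < Real.cos θ₂ := Real.cos_pos_of_mem_Ioo ⟨by linarith [hθ₁.1, hθ₂.1], hθ₂.2⟩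
    have hmono : Real.sin θ₁ ≤ Real.sin θ₂ :=
      (Real.strictMonoOn_sin ⟨hθ₁.1.le, hθ₁.2.le⟩ hθ₂' hθ₂.1).le
    rw [← mul_assoc, mul_comm (ENNReal.ofReal (a * Real.cos θ₂)), mul_assoc]
    rw [← ENNReal.ofReal_mul (by positivity), ← ENNReal.ofReal_mul (by nlinarith)]
    congr 1
    field_simp
  rw [step2]
  rw [setLIntegral_Ioo_eq_ofReal hθ₁.2.le
    (by apply ContinuousOn.mul continuousOn_const; exact
      (Real.continuous_sin.sub continuous_const).continuousOn)
    (fun θ₂ hθ₂ => by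
      have : Real.sin θ₁ ≤ Real.sin θ₂ := by
        rcases eq_or_lt_of_le hθ₂.1.le with h | h
        · rw [h]
        · exact (Real.strictMonoOn_sin ⟨hθ₁.1.le, hθ₁.2.le⟩
            ⟨by linarith [hθ₁.1], hθ₂.2.le⟩ h).le
      have hpos : 0 ≤ a / (2*π) := by positivity
      nlinarith)]
  congr 1
  rw [intervalIntegral.integral_const_mul, inner_integral_eq]

lemma Hd_eq (d : ℝ) :
    Hd d = ENNReal.ofReal (if d^2 < 1 then Real.sqrt (1 - d^2) / π^2 else 0) := by
  by_cases hd : d^2 < 1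
  · set a := Real.sqrt (1 - d^2) with ha
    have ha0 : 0 < a := Real.sqrt_pos.2 (by linarith)
    rw [if_pos hd]
    have step1 : Hd d = ∫⁻ t in Ioo (-a) a,
        ENNReal.ofReal (1 / (2 * π * Real.sqrt (a^2 - t^2))) * Jd d t := by
      rw [Hd]
      have : ∀ t : ℝ, ad (d^2 + t^2) * Jd d t
          = (Ioo (-a) a).indicator
              (fun t => ENNReal.ofReal (1 / (2 * π * Real.sqrt (a^2 - t^2))) * Jd d t) t := by
        intro t
        rw [ad_indicator hd ha]
        by_cases h : t ∈ Ioo (-a) a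
        · rw [Set.indicator_of_mem h, Set.indicator_of_mem h]
        · rw [Set.indicator_of_notMem h, Set.indicator_of_notMem h, zero_mul]
      simp_rw [this]
      rw [lintegral_indicator measurableSet_Ioo]
    rw [step1]
    have himg : Ioo (-a) a = Ioo (a * Real.sin (-(π/2))) (a * Real.sin (π/2)) := by
      rw [Real.sin_pi_div_two, Real.sin_neg, Real.sin_pi_div_two, mul_one, mul_neg, mul_one]
    rw [himg, lintegral_sin_subst ha0 (le_refl _) (le_refl _) (by linarith [Real.pi_pos])]
    have step2 : ∫⁻ θ in Ioo (-(π/2)) (π/2), ENNReal.ofReal (a * Real.cos θ) *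
          (ENNReal.ofReal (1 / (2 * π * Real.sqrt (a^2 - (a * Real.sin θ)^2)))
            * Jd d (a * Real.sin θ))
        = ∫⁻ θ in Ioo (-(π/2)) (π/2),
            ENNReal.ofReal (a / (4*π^2) * (Real.cos θ - (π/2 - θ) * Real.sin θ)) := by
      refine setLIntegral_congr_fun measurableSet_Ioo (fun θ hθ => ?_)
      rw [sqrt_helper ha0.le ⟨hθ.1.le, hθ.2.le⟩, Jd_value hd ha hθ]
      have hc : 0 < Real.cos θ := Real.cos_pos_of_mem_Ioo hθ
      rw [← mul_assoc, ← ENNReal.ofReal_mul (by positivity),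
        ← ENNReal.ofReal_mul (by
          have : a * Real.cos θ * (1 / (2 * π * (a * Real.cos θ))) = 1/(2*π) := by
            field_simp
          rw [this]; positivity)]
      congr 1
      have hπ : (0:ℝ) < π := Real.pi_pos
      field_simp
      ring
    rw [step2]
    rw [setLIntegral_Ioo_eq_ofReal (by linarith [Real.pi_pos])
      (by
        apply ContinuousOn.mul continuousOn_const
        apply ContinuousOn.sub Real.continuous_cos.continuousOn
        exact (continuous_const.sub continuous_id).continuousOn.mul
          Real.continuous_sin.continuousOn)
      (fun θ hθ => by
        have h := inner_integral_nonneg hθ.1.le hθ.2.le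
        have hpos : 0 ≤ a / (4*π^2) := by positivity
        nlinarith)]
    rw [intervalIntegral.integral_const_mul, outer_integral_eq]
    congr 1
    have hπ : (0:ℝ) < π := Real.pi_pos
    field_simp
  · rw [if_neg hd]
    have : ∀ t : ℝ, ad (d^2 + t^2) * Jd d t = 0 := by
      intro t
      rw [ad_zero (by nlinarith [sq_nonneg t, not_lt.1 hd]), zero_mul]
    rw [Hd]
    simp_rw [this]
    simp


def f₀ : ℝ × ℝ → ℝ≥0∞ := fun p => ad (p.1^2 + p.2^2)

lemma measurable_f₀ : Measurable f₀ :=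
  measurable_ad.comp ((measurable_fst.pow_const 2).add (measurable_snd.pow_const 2))

lemma f₀_ne_top (p : ℝ × ℝ) : f₀ p ≠ ⊤ := ENNReal.ofReal_ne_top

lemma ad_ne_top (s : ℝ) : ad s ≠ ⊤ := ENNReal.ofReal_ne_top

def J (x : ℝ × ℝ) (α : ℝ) : ℝ≥0∞ :=
  ∫⁻ ρ in Ioi 0, ENNReal.ofReal ρ * ad ((x.1 + ρ * Real.cos α)^2 + (x.2 + ρ * Real.sin α)^2)

lemma measurable_J : Measurable (fun z : (ℝ × ℝ) × ℝ => J z.1 z.2) := by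
  apply Measurable.lintegral_prod_right'
    (f := fun q : ((ℝ × ℝ) × ℝ) × ℝ => ENNReal.ofReal q.2
      * ad ((q.1.1.1 + q.2 * Real.cos q.1.2)^2 + (q.1.1.2 + q.2 * Real.sin q.1.2)^2))
  apply Measurable.mul (ENNReal.measurable_ofReal.comp measurable_snd)
  apply measurable_ad.comp
  apply Measurable.add <;> apply Measurable.pow_const
  · exact (measurable_fst.fst.fst.add (measurable_snd.mul
      ((Real.continuous_cos.measurable).comp measurable_fst.snd)))
  · exact (measurable_fst.fst.snd.add (measurable_snd.mul
      ((Real.continuous_sin.measurable).comp measurable_fst.snd)))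

lemma measurable_Jd : Measurable (fun z : ℝ × ℝ => Jd z.1 z.2) := by
  apply Measurable.lintegral_prod_right'
    (f := fun q : (ℝ × ℝ) × ℝ => ENNReal.ofReal q.2
      * ad (q.1.1^2 + (q.1.2 + q.2)^2))
  apply Measurable.mul (ENNReal.measurable_ofReal.comp measurable_snd)
  apply measurable_ad.comp
  exact ((measurable_fst.fst.pow_const 2).add ((measurable_fst.snd.add measurable_snd).pow_const 2))

lemma J_rot (α : ℝ) (z : ℝ × ℝ) (hρ : True) :
    J (z.1 * Real.sin α + z.2 * Real.cos α, -(z.1 * Real.cos α) + z.2 * Real.sin α) α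
      = Jd z.1 z.2 := by
  unfold J Jd
  refine lintegral_congr fun ρ => ?_
  congr 2
  simp only
  linear_combination (z.1^2 + (z.2 + ρ)^2) * Real.sin_sq_add_cos_sq α

lemma archimedes_eq : archimedes = volume.withDensity f₀ := by
  unfold archimedes f₀ ad
  congr 1
  funext p
  rw [sub_sub]

instance : SFinite archimedes := by
  rw [archimedes_eq]; infer_instance

lemma measurable_signedDist : Measurable signedDistLine := by
  apply Measurable.div
  · exact ((measurable_fst.fst.mul measurable_snd.snd).sub
      (measurable_snd.fst.mul measurable_fst.snd))
  · exact (Real.continuous_sqrt.measurable).comp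
      (((measurable_fst.fst.sub measurable_snd.fst).pow_const 2).add
        ((measurable_fst.snd.sub measurable_snd.snd).pow_const 2))

lemma signedDist_shift (x : ℝ × ℝ) {ρ α : ℝ} (hρ : 0 < ρ) :
    signedDistLine (x, (x.1 + ρ * Real.cos α, x.2 + ρ * Real.sin α))
      = x.1 * Real.sin α - x.2 * Real.cos α := by
  unfold signedDistLine
  simp only
  have h1 : (x.1 - (x.1 + ρ * Real.cos α))^2 + (x.2 - (x.2 + ρ * Real.sin α))^2 = ρ^2 := by
    linear_combination ρ^2 * Real.sin_sq_add_cos_sq α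
  rw [h1, Real.sqrt_sq hρ.le]
  field_simp
  ring

lemma prod_add_eq (x : ℝ × ℝ) (c d : ℝ) : x + (c, d) = (x.1 + c, x.2 + d) := by
  rw [← Prod.mk.eta (p := x), Prod.mk_add_mk]

lemma key {A : Set ℝ} (hA : MeasurableSet A) :
    (archimedes.prod archimedes) (signedDistLine ⁻¹' A)
      = ∫⁻ r in A, ENNReal.ofReal
          (if r ∈ Set.Ioo (-1 : ℝ) 1 then (2 / Real.pi) * Real.sqrt (1 - r ^ 2) else 0) := by
  classical
  set χ : ℝ → ℝ≥0∞ := A.indicator (fun _ => 1) with hχ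
  have hχm : Measurable χ := measurable_const.indicator hA
  have hχtop : ∀ r, χ r ≠ ⊤ := by
    intro r; rw [hχ]
    by_cases h : r ∈ A <;> simp [Set.indicator_apply, h]
  have hS : MeasurableSet (signedDistLine ⁻¹' A) := measurable_signedDist hA
  -- Step 1 : write the product measure as an iterated integral against densities
  have slice : ∀ x : ℝ × ℝ, (volume.withDensity f₀) (Prod.mk x ⁻¹' (signedDistLine ⁻¹' A))
      = ∫⁻ y, f₀ y * χ (signedDistLine (x, y)) := by
    intro x
    rw [withDensity_apply _ (measurable_prodMk_left hS),
      ← lintegral_indicator (measurable_prodMk_left hS)]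
    refine lintegral_congr fun y => ?_
    rw [Set.indicator_apply, hχ, Set.indicator_apply]
    by_cases h : signedDistLine (x, y) ∈ A
    · rw [if_pos h, if_pos (by exact h), mul_one]
    · rw [if_neg h, if_neg (by exact h), mul_zero]
  have step1 : (archimedes.prod archimedes) (signedDistLine ⁻¹' A)
      = ∫⁻ x, f₀ x * ∫⁻ y, f₀ y * χ (signedDistLine (x, y)) := by
    rw [Measure.prod_apply hS, archimedes_eq,
      lintegral_withDensity_eq_lintegral_mul _ measurable_f₀
        (measurable_measure_prodMk_left hS)]
    refine lintegral_congr fun x => ?_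
    rw [Pi.mul_apply, slice x]
  -- Step 2 : translation + polar coordinates in the inner integral
  have step2 : ∀ x : ℝ × ℝ, (∫⁻ y, f₀ y * χ (signedDistLine (x, y)))
      = ∫⁻ α in Ioo (-π) π, χ (x.1 * Real.sin α - x.2 * Real.cos α) * J x α := by
    intro x
    rw [← lintegral_add_left_eq_self (fun y => f₀ y * χ (signedDistLine (x, y))) x]
    rw [← lintegral_comp_polarCoord_symm (fun p => f₀ (x + p) * χ (signedDistLine (x, x + p)))]
    simp only [polarCoord_symm_apply, polarCoord_target]
    have hGm : Measurable (fun q : ℝ × ℝ => ENNReal.ofReal q.1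
        * (f₀ (x + (q.1 * Real.cos q.2, q.1 * Real.sin q.2))
          * χ (signedDistLine (x, x + (q.1 * Real.cos q.2, q.1 * Real.sin q.2))))) := by
      have hmap : Measurable (fun q : ℝ × ℝ =>
          x + (q.1 * Real.cos q.2, q.1 * Real.sin q.2)) := by
        apply Measurable.add measurable_const
        exact (measurable_fst.mul
            ((Real.continuous_cos.measurable).comp measurable_snd)).prodMk
          (measurable_fst.mul ((Real.continuous_sin.measurable).comp measurable_snd))
      exact (ENNReal.measurable_ofReal.comp measurable_fst).mul
        ((measurable_f₀.comp hmap).mul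
          (hχm.comp (measurable_signedDist.comp (measurable_const.prodMk hmap))))
    rw [MeasureTheory.Measure.volume_eq_prod, ← Measure.prod_restrict,
      lintegral_prod_symm _ hGm.aemeasurable]
    refine setLIntegral_congr_fun measurableSet_Ioo (fun α hα => ?_)
    have inner : ∀ ρ : ℝ, ρ ∈ Ioi (0:ℝ) → ENNReal.ofReal ρ
        * (f₀ (x + (ρ * Real.cos α, ρ * Real.sin α))
          * χ (signedDistLine (x, x + (ρ * Real.cos α, ρ * Real.sin α))))
        = χ (x.1 * Real.sin α - x.2 * Real.cos α)
          * (ENNReal.ofReal ρ * ad ((x.1 + ρ * Real.cos α)^2 + (x.2 + ρ * Real.sin α)^2)) := by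
      intro ρ hρ
      rw [prod_add_eq, signedDist_shift x hρ]
      have : f₀ (x.1 + ρ * Real.cos α, x.2 + ρ * Real.sin α)
          = ad ((x.1 + ρ * Real.cos α)^2 + (x.2 + ρ * Real.sin α)^2) := rfl
      rw [this]
      ring
    rw [setLIntegral_congr_fun measurableSet_Ioi inner,
      lintegral_const_mul' _ _ (hχtop _)]
    rfl
  -- Step 3 : swap the two outer integrals
  have hswapm : Measurable (fun z : (ℝ × ℝ) × ℝ =>
      f₀ z.1 * (χ (z.1.1 * Real.sin z.2 - z.1.2 * Real.cos z.2) * J z.1 z.2)) := by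
    apply (measurable_f₀.comp measurable_fst).mul
    apply Measurable.mul
    · apply hχm.comp
      exact (measurable_fst.fst.mul
          ((Real.continuous_sin.measurable).comp measurable_snd)).sub
        (measurable_fst.snd.mul ((Real.continuous_cos.measurable).comp measurable_snd))
    · exact measurable_J
  have step3 : (∫⁻ x, f₀ x * ∫⁻ α in Ioo (-π) π,
        χ (x.1 * Real.sin α - x.2 * Real.cos α) * J x α)
      = ∫⁻ α in Ioo (-π) π, ∫⁻ x,
          f₀ x * (χ (x.1 * Real.sin α - x.2 * Real.cos α) * J x α) := by
    have : ∀ x : ℝ × ℝ, f₀ x * ∫⁻ α in Ioo (-π) π,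
        χ (x.1 * Real.sin α - x.2 * Real.cos α) * J x α
        = ∫⁻ α in Ioo (-π) π, f₀ x * (χ (x.1 * Real.sin α - x.2 * Real.cos α) * J x α) :=
      fun x => (lintegral_const_mul' _ _ (f₀_ne_top x)).symm
    simp_rw [this]
    exact lintegral_lintegral_swap hswapm.aemeasurable
  -- Step 4 : rotation for fixed α, then Fubini in (d, t)
  have step4 : ∀ α : ℝ, (∫⁻ x, f₀ x * (χ (x.1 * Real.sin α - x.2 * Real.cos α) * J x α))
      = ∫⁻ d, χ d * Hd d := by
    intro α
    rw [lintegral_rot α (fun x => f₀ x * (χ (x.1 * Real.sin α - x.2 * Real.cos α) * J x α))]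
    have ptwise : ∀ z : ℝ × ℝ,
        f₀ (z.1 * Real.sin α + z.2 * Real.cos α, -(z.1 * Real.cos α) + z.2 * Real.sin α)
          * (χ ((z.1 * Real.sin α + z.2 * Real.cos α) * Real.sin α
              - (-(z.1 * Real.cos α) + z.2 * Real.sin α) * Real.cos α)
            * J (z.1 * Real.sin α + z.2 * Real.cos α,
                -(z.1 * Real.cos α) + z.2 * Real.sin α) α)
        = ad (z.1^2 + z.2^2) * (χ z.1 * Jd z.1 z.2) := by
      intro z
      have h1 : f₀ (z.1 * Real.sin α + z.2 * Real.cos α,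
          -(z.1 * Real.cos α) + z.2 * Real.sin α) = ad (z.1^2 + z.2^2) := by
        unfold f₀
        congr 1
        simp only
        linear_combination (z.1^2 + z.2^2) * Real.sin_sq_add_cos_sq α
      have h2 : (z.1 * Real.sin α + z.2 * Real.cos α) * Real.sin α
          - (-(z.1 * Real.cos α) + z.2 * Real.sin α) * Real.cos α = z.1 := by
        linear_combination z.1 * Real.sin_sq_add_cos_sq α
      rw [h1, h2, J_rot α z trivial]
    simp_rw [ptwise]
    -- Fubini in (d, t)
    have hm : Measurable (fun z : ℝ × ℝ => ad (z.1^2 + z.2^2) * (χ z.1 * Jd z.1 z.2)) := by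
      apply Measurable.mul
      · exact measurable_ad.comp ((measurable_fst.pow_const 2).add (measurable_snd.pow_const 2))
      · exact (hχm.comp measurable_fst).mul measurable_Jd
    rw [MeasureTheory.Measure.volume_eq_prod, lintegral_prod _ hm.aemeasurable]
    refine lintegral_congr fun d => ?_
    rw [Hd, ← lintegral_const_mul' _ _ (hχtop d)]
    exact lintegral_congr fun t => by ring
  -- Step 5 : put everything together
  rw [step1]
  have : (∫⁻ x, f₀ x * ∫⁻ y, f₀ y * χ (signedDistLine (x, y)))
      = ∫⁻ x, f₀ x * ∫⁻ α in Ioo (-π) π,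
          χ (x.1 * Real.sin α - x.2 * Real.cos α) * J x α := by
    refine lintegral_congr fun x => ?_
    rw [step2 x]
  rw [this, step3]
  rw [setLIntegral_congr_fun measurableSet_Ioo
    (fun α _ => step4 α)]
  rw [setLIntegral_const, Real.volume_Ioo]
  rw [show π - (-π) = 2 * π by ring]
  rw [← lintegral_mul_const' _ _ ENNReal.ofReal_ne_top]
  rw [← lintegral_indicator hA]
  refine lintegral_congr fun d => ?_
  rw [Hd_eq]
  by_cases hd : d ∈ A
  · rw [hχ, Set.indicator_of_mem hd, Set.indicator_of_mem hd, one_mul]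
    by_cases h1 : d^2 < 1
    · have h2 : d ∈ Ioo (-1:ℝ) 1 := by constructor <;> nlinarith
      rw [if_pos h1, if_pos h2, ← ENNReal.ofReal_mul (by positivity)]
      congr 1
      have hπ : (0:ℝ) < π := Real.pi_pos
      field_simp
    · have h2 : d ∉ Ioo (-1:ℝ) 1 := by
        intro h
        exact h1 (by nlinarith [h.1, h.2])
      rw [if_neg h1, if_neg h2]
      simp
  · rw [hχ, Set.indicator_of_notMem hd, Set.indicator_of_notMem hd, zero_mul, zero_mul]

end Stmt13Aux

/-- If `X₁, X₂` are independent points of `ℝ²`, each with the Archimedes distribution,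
then almost surely `X₁ ≠ X₂` (so the signed distance from the origin to the line through
`X₁` and `X₂` is well defined almost surely), and this signed distance has the semicircle
law, with density `(2/π) √(1 - r²)` on `(-1, 1)` with respect to Lebesgue measure. -/
theorem stmt13 :
    (archimedes.prod archimedes) {p : (ℝ × ℝ) × (ℝ × ℝ) | p.1 = p.2} = 0 ∧
      (archimedes.prod archimedes).map signedDistLine =
        volume.withDensity fun r : ℝ =>
          ENNReal.ofReal
            (if r ∈ Set.Ioo (-1 : ℝ) 1 then (2 / Real.pi) * Real.sqrt (1 - r ^ 2)
             else 0) := by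
  constructor
  · have hdiag : MeasurableSet {p : (ℝ × ℝ) × (ℝ × ℝ) | p.1 = p.2} :=
      measurableSet_eq_fun measurable_fst measurable_snd
    rw [MeasureTheory.Measure.prod_apply hdiag]
    have h0 : ∀ x : ℝ × ℝ,
        archimedes (Prod.mk x ⁻¹' {p : (ℝ × ℝ) × (ℝ × ℝ) | p.1 = p.2}) = 0 := by
      intro x
      have hset : Prod.mk x ⁻¹' {p : (ℝ × ℝ) × (ℝ × ℝ) | p.1 = p.2} = {x} := by
        ext y
        simp [eq_comm]
      rw [hset, Stmt13Aux.archimedes_eq,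
        MeasureTheory.withDensity_apply _ (measurableSet_singleton x),
        setLIntegral_measure_zero _ _ (measure_singleton x)]
    simp_rw [h0]
    simp
  · ext A hA
    rw [MeasureTheory.Measure.map_apply Stmt13Aux.measurable_signedDist hA,
      Stmt13Aux.key hA, MeasureTheory.withDensity_apply _ hA]
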